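/- arXiv:1603.01786 — 7 statements merged into one kernel-verified Lean document; each statement's English description precedes it below -/
import Mathlib

section
/- Let d_1, ..., d_n be nonzero vectors in R^2 such that the angle between any pair of them is at most θ, where 0 ≤ θ ≤ π/2. Then (Σ_{i=1}^n |d_i|) / |Σ_{i=1}^n d_i| ≤ sec(θ/2). -/
/-!
Vectors in the plane whose pairwise angles are at most `θ ≤ π / 2` lie in a sector of opening `θ`:
once one of them is rotated onto the positive real axis, all arguments lie in `[-π/2, π/2]`, where
the angle between two vectors is the difference of their arguments. The bisector `u` of that sector
makes an angle at most `θ / 2` with every `dᵢ`, hence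
`‖u‖ ‖∑ dᵢ‖ ≥ ⟪u, ∑ dᵢ⟫ = ∑ ‖u‖ ‖dᵢ‖ cos ∠(u, dᵢ) ≥ ‖u‖ cos (θ / 2) ∑ ‖dᵢ‖`.
-/

open InnerProductGeometry Module Real

theorem cos_mul_sum_norm_le_norm_sum {ι E : Type*} [Fintype ι] [NormedAddCommGroup E]
    [InnerProductSpace ℝ E] {u : E} (hu : u ≠ 0) {α : ℝ} (hα : α ≤ π) {d : ι → E}
    (h : ∀ i, angle u (d i) ≤ α) :
    cos α * ∑ i, ‖d i‖ ≤ ‖∑ i, d i‖ := by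
  have hterm : ∀ i, ‖u‖ * (cos α * ‖d i‖) ≤ inner ℝ u (d i) := fun i => by
    rw [← cos_angle_mul_norm_mul_norm, mul_left_comm]
    have := cos_le_cos_of_nonneg_of_le_pi (angle_nonneg u (d i)) hα (h i)
    gcongr
  refine le_of_mul_le_mul_left ?_ (norm_pos_iff.2 hu)
  calc ‖u‖ * (cos α * ∑ i, ‖d i‖) = ∑ i, ‖u‖ * (cos α * ‖d i‖) := by
        rw [Finset.mul_sum, Finset.mul_sum]
    _ ≤ ∑ i, inner ℝ u (d i) := Finset.sum_le_sum fun i _ => hterm i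
    _ = inner ℝ u (∑ i, d i) := (inner_sum _ _ _).symm
    _ ≤ ‖u‖ * ‖∑ i, d i‖ := real_inner_le_norm _ _

namespace Complex

variable {ι : Type*} [Finite ι] {θ : ℝ}

theorem cos_angle_eq_cos_arg_sub_arg {x y : ℂ} (hx : x ≠ 0) (hy : y ≠ 0) :
    Real.cos (angle x y) = Real.cos (x.arg - y.arg) := by
  rw [angle_eq_abs_arg hx hy, Real.cos_abs, ← Real.Angle.cos_coe, arg_div_coe_angle hx hy,
    ← Real.Angle.coe_sub, Real.Angle.cos_coe]

theorem angle_eq_abs_arg_sub_arg {x y : ℂ} (hx : x ≠ 0) (hy : y ≠ 0)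
    (h : |x.arg - y.arg| ≤ π) : angle x y = |x.arg - y.arg| := by
  rw [← Real.arccos_cos (angle_nonneg x y) (angle_le_pi x y), cos_angle_eq_cos_arg_sub_arg hx hy,
    ← Real.cos_abs, Real.arccos_cos (abs_nonneg _) h]

theorem exists_angle_le_half_of_abs_arg_le [Nonempty ι] {z : ι → ℂ} (hz : ∀ i, z i ≠ 0)
    (harg : ∀ i, |(z i).arg| ≤ π / 2) (h : ∀ i j, angle (z i) (z j) ≤ θ) :
    ∃ u ≠ 0, ∀ i, angle u (z i) ≤ θ / 2 := by
  obtain ⟨imax, hmax⟩ := Finite.exists_max fun i => (z i).arg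
  obtain ⟨imin, hmin⟩ := Finite.exists_min fun i => (z i).arg
  have hspread : (z imax).arg - (z imin).arg ≤ θ := by
    have hle := h imax imin
    rw [angle_eq_abs_arg_sub_arg (hz _) (hz _)
      ((abs_sub _ _).trans (by linarith [harg imax, harg imin]))] at hle
    exact (le_abs_self _).trans hle
  set φ := ((z imax).arg + (z imin).arg) / 2 with hφ_def
  have hφ_abs : |φ| ≤ π / 2 := by
    rw [hφ_def, abs_div, abs_two]
    linarith [abs_add_le (z imax).arg (z imin).arg, harg imax, harg imin]
  have hφ_arg : (exp (φ * I)).arg = φ := by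
    rw [exp_mul_I, arg_cos_add_sin_mul_I]
    constructor <;> linarith [abs_le.1 hφ_abs, pi_pos]
  refine ⟨exp (φ * I), exp_ne_zero _, fun i => ?_⟩
  rw [angle_eq_abs_arg_sub_arg (exp_ne_zero _) (hz i)
    (by rw [hφ_arg]; exact (abs_sub _ _).trans (by linarith [harg i])), hφ_arg]
  exact abs_le.2 ⟨by linarith [hmax i], by linarith [hmin i]⟩

theorem exists_angle_le_half (hθ : θ ≤ π / 2) {z : ι → ℂ} (hz : ∀ i, z i ≠ 0)
    (h : ∀ i j, angle (z i) (z j) ≤ θ) : ∃ u ≠ 0, ∀ i, angle u (z i) ≤ θ / 2 := by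
  rcases isEmpty_or_nonempty ι with hι | hι
  · exact ⟨1, one_ne_zero, isEmptyElim⟩
  have i₀ : ι := Classical.arbitrary ι
  set w := fun i => z i / z i₀
  have hw : ∀ i, w i ≠ 0 := fun i => div_ne_zero (hz i) (hz i₀)
  have hw_angle : ∀ i j, angle (w i) (w j) = angle (z i) (z j) := fun i j => by
    simp only [w, div_eq_mul_inv, angle_mul_right (inv_ne_zero (hz i₀))]
  have hw_arg : ∀ i, |(w i).arg| ≤ π / 2 := fun i => by
    rw [← angle_one_right (hw i), ← div_self (hz i₀), hw_angle]
    exact (h i i₀).trans hθ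
  obtain ⟨v, hv, hvw⟩ := exists_angle_le_half_of_abs_arg_le hw hw_arg
    fun i j => (hw_angle i j).trans_le (h i j)
  exact ⟨v * z i₀, mul_ne_zero hv (hz i₀),
    fun i => (angle_div_right_eq_angle_mul_left _ _ _).symm.trans_le (hvw i)⟩

end Complex

theorem exists_angle_le_half_of_finrank_eq_two {ι E : Type*} [Finite ι] [NormedAddCommGroup E]
    [InnerProductSpace ℝ E] (hE : finrank ℝ E = 2) {θ : ℝ} (hθ : θ ≤ π / 2) {d : ι → E}
    (hd : ∀ i, d i ≠ 0) (h : ∀ i j, angle (d i) (d j) ≤ θ) :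
    ∃ u ≠ 0, ∀ i, angle u (d i) ≤ θ / 2 := by
  have : FiniteDimensional ℝ E := Module.finite_of_finrank_eq_succ hE
  let f : E ≃ₗᵢ[ℝ] ℂ := (stdOrthonormalBasis ℝ E).equiv Complex.orthonormalBasisOneI (finCongr hE)
  have hf : ∀ x y, angle (f x) (f y) = angle x y := f.toLinearIsometry.angle_map
  obtain ⟨v, hv, hvd⟩ := Complex.exists_angle_le_half hθ (z := f ∘ d) (by simpa using hd)
    (by simpa [hf] using h)
  refine ⟨f.symm v, by simpa using hv, fun i => ?_⟩
  rw [← hf, f.apply_symm_apply]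
  exact hvd i

theorem secant_bound (n : ℕ) (θ : ℝ) (hθ0 : 0 ≤ θ) (hθ : θ ≤ Real.pi / 2)
    (d : Fin n → EuclideanSpace ℝ (Fin 2))
    (hne : ∀ i, d i ≠ 0)
    (hang : ∀ i j, InnerProductGeometry.angle (d i) (d j) ≤ θ) :
    (∑ i, ‖d i‖) / ‖∑ i, d i‖ ≤ 1 / Real.cos (θ / 2) := by
  have hcos : 0 < cos (θ / 2) := cos_pos_of_mem_Ioo ⟨by linarith [pi_pos], by linarith [pi_pos]⟩
  obtain ⟨u, hu, hud⟩ :=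
    exists_angle_le_half_of_finrank_eq_two finrank_euclideanSpace_fin hθ hne hang
  have hkey := cos_mul_sum_norm_le_norm_sum hu (by linarith [pi_pos]) hud
  rcases (norm_nonneg (∑ i, d i)).eq_or_lt with hzero | hpos
  · rw [← hzero, div_zero]
    positivity
  rw [div_le_div_iff₀ hpos hcos]
  linarith
end

section
/- Let d_1, d_2 be complex numbers with arg(d_1), arg(d_2) ∈ [0, θ] for some θ ∈ [0, π/2]. Then |d_1| + |d_2| ≤ sec(θ/2) · |d_1 + d_2|. -/
/-!
Rotating by `exp (-θ/2 · I)` puts every `dᵢ` into the sector `|arg| ≤ θ/2`, where the real part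
of a complex number is at least `cos (θ/2)` times its modulus. Real parts add, and the real part
of the rotated sum is at most its modulus `‖d₁ + d₂‖`.
-/

namespace Complex

lemma cos_mul_norm_le_re_exp_neg_mul (d : ℂ) {α δ : ℝ} (hδ : δ ≤ Real.pi)
    (h : |d.arg - α| ≤ δ) :
    Real.cos δ * ‖d‖ ≤ (exp (-α * I) * d).re := by
  have hrot : exp (-α * I) * d = ‖d‖ * exp ((d.arg - α : ℝ) * I) := by
    conv_lhs => rw [← norm_mul_exp_arg_mul_I d]
    rw [mul_left_comm, ← exp_add]
    push_cast
    ring_nf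
  have hcos : Real.cos δ ≤ Real.cos (d.arg - α) := by
    rw [← Real.cos_abs (d.arg - α)]
    exact Real.cos_le_cos_of_nonneg_of_le_pi (abs_nonneg _) hδ h
  rw [hrot, re_ofReal_mul, exp_ofReal_mul_I_re, mul_comm]
  exact mul_le_mul_of_nonneg_left hcos (norm_nonneg d)

lemma cos_mul_sum_norm_le_norm_sum {ι : Type*} (s : Finset ι) (d : ι → ℂ) {α δ : ℝ}
    (hδ : δ ≤ Real.pi) (h : ∀ i ∈ s, |(d i).arg - α| ≤ δ) :
    Real.cos δ * ∑ i ∈ s, ‖d i‖ ≤ ‖∑ i ∈ s, d i‖ :=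
  calc Real.cos δ * ∑ i ∈ s, ‖d i‖
      = ∑ i ∈ s, Real.cos δ * ‖d i‖ := Finset.mul_sum _ _ _
    _ ≤ ∑ i ∈ s, (exp (-α * I) * d i).re :=
        Finset.sum_le_sum fun i hi => cos_mul_norm_le_re_exp_neg_mul (d i) hδ (h i hi)
    _ = (exp (-α * I) * ∑ i ∈ s, d i).re := by rw [Finset.mul_sum, re_sum]
    _ ≤ ‖exp (-α * I) * ∑ i ∈ s, d i‖ := re_le_norm _
    _ = ‖∑ i ∈ s, d i‖ := by
        rw [norm_mul, ← ofReal_neg, norm_exp_ofReal_mul_I, one_mul]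

end Complex

theorem secant_bound_two_complex_general (θ : ℝ) (hθ : θ ≤ Real.pi / 2)
    (d₁ d₂ : ℂ)
    (h1 : 0 ≤ d₁.arg ∧ d₁.arg ≤ θ) (h2 : 0 ≤ d₂.arg ∧ d₂.arg ≤ θ) :
    ‖d₁‖ + ‖d₂‖ ≤ (1 / Real.cos (θ / 2)) * ‖d₁ + d₂‖ := by
  have hpi := Real.pi_pos
  have hθ0 : 0 ≤ θ := h1.1.trans h1.2
  have hcos : 0 < Real.cos (θ / 2) := Real.cos_pos_of_mem_Ioo ⟨by linarith, by linarith⟩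
  have hhalf : ∀ x : ℝ, 0 ≤ x ∧ x ≤ θ → |x - θ / 2| ≤ θ / 2 := fun x hx =>
    abs_le.mpr ⟨by linarith, by linarith⟩
  have hsector : ∀ i ∈ Finset.univ, |(![d₁, d₂] i).arg - θ / 2| ≤ θ / 2 := by
    intro i _
    fin_cases i
    exacts [hhalf _ h1, hhalf _ h2]
  have key := Complex.cos_mul_sum_norm_le_norm_sum Finset.univ ![d₁, d₂]
    (by linarith) hsector
  simp only [Fin.sum_univ_two, Matrix.cons_val_zero, Matrix.cons_val_one] at key
  rw [one_div, ← div_eq_inv_mul, le_div_iff₀ hcos, mul_comm]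
  exact key

theorem secant_bound_two_complex (θ : ℝ) (hθ0 : 0 ≤ θ) (hθ : θ ≤ Real.pi / 2)
    (d₁ d₂ : ℂ)
    (h1 : 0 ≤ d₁.arg ∧ d₁.arg ≤ θ) (h2 : 0 ≤ d₂.arg ∧ d₂.arg ≤ θ) :
    ‖d₁‖ + ‖d₂‖ ≤ (1 / Real.cos (θ / 2)) * ‖d₁ + d₂‖ :=
  secant_bound_two_complex_general θ hθ d₁ d₂ h1 h2
end

section
/- Let s_1, ..., s_n be complex numbers in the first quadrant (Re(s_k) ≥ 0 and Im(s_k) ≥ 0) and let C > 0. If |Σ_{k∈S} s_k| ≤ C for a subset S ⊆ {1,...,n}, and φ ∈ [0, π/2] is an upper bound on arg(s_k) for all k, then Σ_{k∈S} |s_k| ≤ C / cos(φ/2). -/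
/-!
Rotate by `e^{-iφ/2}`: every `s_k` then has argument in `[-φ/2, φ/2]`, so its real part is at
least `‖s_k‖ cos(φ/2)`. Summing, `cos(φ/2) ∑ ‖s_k‖ ≤ Re(e^{-iφ/2} ∑ s_k) ≤ ‖∑ s_k‖ ≤ C`.
-/

open Complex

theorem Complex.re_mul_exp_neg_mul_I (z : ℂ) (θ : ℝ) :
    (z * exp ((-θ : ℝ) * I)).re = ‖z‖ * Real.cos (arg z - θ) := by
  conv_lhs => rw [← norm_mul_exp_arg_mul_I z]
  rw [mul_assoc, ← Complex.exp_add, ← add_mul, ← ofReal_add, re_ofReal_mul,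
    exp_ofReal_mul_I_re, ← sub_eq_add_neg]

theorem Complex.norm_mul_cos_le_re_mul_exp_neg_mul_I {z : ℂ} {θ α : ℝ}
    (hz : |arg z - θ| ≤ α) (hα : α ≤ Real.pi) :
    ‖z‖ * Real.cos α ≤ (z * exp ((-θ : ℝ) * I)).re := by
  rw [re_mul_exp_neg_mul_I, ← Real.cos_abs (arg z - θ)]
  exact mul_le_mul_of_nonneg_left
    (Real.cos_le_cos_of_nonneg_of_le_pi (abs_nonneg _) hα hz) (norm_nonneg z)

/-- Reverse triangle inequality for vectors lying in a sector of half-opening `α`. -/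
theorem Complex.sum_norm_mul_cos_le_norm_sum {ι : Type*} (S : Finset ι) (s : ι → ℂ)
    {θ α : ℝ} (hs : ∀ k ∈ S, |arg (s k) - θ| ≤ α) (hα : α ≤ Real.pi) :
    (∑ k ∈ S, ‖s k‖) * Real.cos α ≤ ‖∑ k ∈ S, s k‖ :=
  calc (∑ k ∈ S, ‖s k‖) * Real.cos α
      ≤ ∑ k ∈ S, (s k * exp ((-θ : ℝ) * I)).re := by
        rw [Finset.sum_mul]
        exact Finset.sum_le_sum fun k hk => norm_mul_cos_le_re_mul_exp_neg_mul_I (hs k hk) hα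
    _ = ((∑ k ∈ S, s k) * exp ((-θ : ℝ) * I)).re := by rw [Finset.sum_mul, re_sum]
    _ ≤ ‖(∑ k ∈ S, s k) * exp ((-θ : ℝ) * I)‖ := re_le_norm _
    _ = ‖∑ k ∈ S, s k‖ := by rw [norm_mul, norm_exp_ofReal_mul_I, mul_one]

theorem complex_to_real_feasibility_general (n : ℕ) (s : Fin n → ℂ) (C φ : ℝ)
    (him : ∀ k, 0 ≤ (s k).im)
    (hφ0 : 0 ≤ φ) (hφ : φ ≤ Real.pi / 2)
    (harg : ∀ k, (s k).arg ≤ φ)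
    (S : Finset (Fin n))
    (hfeas : ‖∑ k ∈ S, s k‖ ≤ C) :
    ∑ k ∈ S, ‖s k‖ ≤ C / Real.cos (φ / 2) := by
  have hcos : 0 < Real.cos (φ / 2) :=
    Real.cos_pos_of_mem_Ioo ⟨by linarith [Real.pi_pos], by linarith [Real.pi_pos]⟩
  have hsector : ∀ k ∈ S, |arg (s k) - φ / 2| ≤ φ / 2 := fun k _ => by
    have := arg_nonneg_iff.mpr (him k)
    rw [abs_le]
    constructor <;> linarith [harg k]
  rw [le_div_iff₀ hcos]
  exact (sum_norm_mul_cos_le_norm_sum S s hsector (by linarith [Real.pi_pos])).trans hfeas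

theorem complex_to_real_feasibility (n : ℕ) (s : Fin n → ℂ) (C φ : ℝ) (hC : 0 < C)
    (hre : ∀ k, 0 ≤ (s k).re) (him : ∀ k, 0 ≤ (s k).im)
    (hφ0 : 0 ≤ φ) (hφ : φ ≤ Real.pi / 2)
    (harg : ∀ k, (s k).arg ≤ φ)
    (S : Finset (Fin n))
    (hfeas : ‖∑ k ∈ S, s k‖ ≤ C) :
    ∑ k ∈ S, ‖s k‖ ≤ C / Real.cos (φ / 2) :=
  complex_to_real_feasibility_general n s C φ him hφ0 hφ harg S hfeas
end

section
/- Fix θ ∈ [0, π/2) with tan θ polynomial in n, ε > 0, capacity C > 0 and L = εC/(n(tan θ + 1)). Suppose nonnegative reals P₊, P₋, P_I and rounded values P̂₊, P̂₋, P̂_I satisfy max{P̂₊ − nL, 0} ≤ P₊ ≤ P̂₊, max{P̂₋ − nL, 0} ≤ P₋ ≤ P̂₋, max{P̂_I − nL, 0} ≤ P_I ≤ P̂_I, together with P_I ≤ C, P₋ ≤ C tan θ, P₊ ≤ C(1 + tan θ), and (P₊ − P₋)² + P_I² ≤ C². Then (P̂₊ − P̂₋)² + P̂_I² ≤ (1 +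 2ε)² C². -/
/-!
Each rounded coordinate exceeds the true one by an amount in `[0, nL]`, and `nL ≤ εC` because
`tan θ ≥ 0`. Hence both coordinates `P₊ - P₋` and `P_I` of the aggregate demand move by at most
`a = nL`, and a point of the disc of radius `C` moved by at most `a` in each coordinate stays in
the disc of radius `C + 2a ≤ (1 + 2ε) C`.
-/

lemma sub_mem_Icc_of_max_sub_le {P Q a : ℝ} (h : max (Q - a) 0 ≤ P ∧ P ≤ Q) :
    Q - P ∈ Set.Icc 0 a :=
  ⟨sub_nonneg.mpr h.2, by linarith [le_max_left (Q - a) 0, h.1]⟩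

lemma abs_sub_sub_sub_le_of_mem_Icc {P₁ P₂ Q₁ Q₂ a : ℝ} (h₁ : Q₁ - P₁ ∈ Set.Icc 0 a)
    (h₂ : Q₂ - P₂ ∈ Set.Icc 0 a) : |(Q₁ - Q₂) - (P₁ - P₂)| ≤ a := by
  rw [show (Q₁ - Q₂) - (P₁ - P₂) = (Q₁ - P₁) - (Q₂ - P₂) by ring]
  exact abs_sub_le_of_nonneg_of_le h₁.1 h₁.2 h₂.1 h₂.2

lemma sq_le_sq_add_of_abs_sub_le {x y a C : ℝ} (hy : |y - x| ≤ a) (hx : |x| ≤ C) :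
    y ^ 2 ≤ x ^ 2 + 2 * a * C + a ^ 2 := by
  have ha : 0 ≤ a := (abs_nonneg _).trans hy
  have hyx : |y| ≤ |x| + a := by linarith [abs_sub_abs_le_abs_sub y x]
  calc y ^ 2 = |y| ^ 2 := (sq_abs y).symm
    _ ≤ (|x| + a) ^ 2 := pow_le_pow_left₀ (abs_nonneg y) hyx 2
    _ = x ^ 2 + 2 * a * |x| + a ^ 2 := by rw [add_sq, sq_abs]; ring
    _ ≤ x ^ 2 + 2 * a * C + a ^ 2 := by gcongr

lemma sq_add_sq_le_of_abs_sub_le {x₁ x₂ y₁ y₂ a C : ℝ} (h₁ : |y₁ - x₁| ≤ a) (h₂ : |y₂ - x₂| ≤ a)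
    (hC : 0 ≤ C) (hx : x₁ ^ 2 + x₂ ^ 2 ≤ C ^ 2) : y₁ ^ 2 + y₂ ^ 2 ≤ (C + 2 * a) ^ 2 := by
  have ha : 0 ≤ a := (abs_nonneg _).trans h₁
  have hx₁ : |x₁| ≤ C := abs_le_of_sq_le_sq (by nlinarith [sq_nonneg x₂]) hC
  have hx₂ : |x₂| ≤ C := abs_le_of_sq_le_sq (by nlinarith [sq_nonneg x₁]) hC
  nlinarith [sq_le_sq_add_of_abs_sub_le h₁ hx₁, sq_le_sq_add_of_abs_sub_le h₂ hx₂]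

lemma natCast_mul_div_natCast_mul_le {n : ℕ} (hn : n ≠ 0) {x t : ℝ} (hx : 0 ≤ x) (ht : 0 ≤ t) :
    n * (x / (n * (t + 1))) ≤ x := by
  rw [← mul_div_assoc, mul_div_mul_left _ _ (Nat.cast_ne_zero.mpr hn)]
  exact div_le_self hx (by linarith)

theorem rounded_projection_bound_general (n : ℕ) (hn : 0 < n) (θ ε C : ℝ)
    (hθ0 : 0 ≤ θ) (hθ : θ < Real.pi / 2) (hε : 0 < ε) (hC : 0 < C)
    (L : ℝ) (hL : L = ε * C / (n * (Real.tan θ + 1)))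
    (Pp Pm Pi Qp Qm Qi : ℝ)
    (hQp : max (Qp - n * L) 0 ≤ Pp ∧ Pp ≤ Qp)
    (hQm : max (Qm - n * L) 0 ≤ Pm ∧ Pm ≤ Qm)
    (hQi : max (Qi - n * L) 0 ≤ Pi ∧ Pi ≤ Qi)
    (hmag : (Pp - Pm) ^ 2 + Pi ^ 2 ≤ C ^ 2) :
    (Qp - Qm) ^ 2 + Qi ^ 2 ≤ (1 + 2 * ε) ^ 2 * C ^ 2 := by
  have htan : 0 ≤ Real.tan θ := Real.tan_nonneg_of_nonneg_of_le_pi_div_two hθ0 hθ.le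
  have hnL : n * L ≤ ε * C :=
    hL ▸ natCast_mul_div_natCast_mul_le hn.ne' (mul_pos hε hC).le htan
  have hi := sub_mem_Icc_of_max_sub_le hQi
  have hdiff : |(Qp - Qm) - (Pp - Pm)| ≤ n * L :=
    abs_sub_sub_sub_le_of_mem_Icc (sub_mem_Icc_of_max_sub_le hQp) (sub_mem_Icc_of_max_sub_le hQm)
  have hin : |Qi - Pi| ≤ n * L := (abs_of_nonneg hi.1).trans_le hi.2
  calc (Qp - Qm) ^ 2 + Qi ^ 2 ≤ (C + 2 * (n * L)) ^ 2 :=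
        sq_add_sq_le_of_abs_sub_le hdiff hin hC.le hmag
    _ ≤ ((1 + 2 * ε) * C) ^ 2 :=
        pow_le_pow_left₀ (by linarith [(abs_nonneg _).trans hin]) (by linarith) 2
    _ = (1 + 2 * ε) ^ 2 * C ^ 2 := mul_pow _ _ _

theorem rounded_projection_bound (n : ℕ) (hn : 0 < n) (θ ε C : ℝ)
    (hθ0 : 0 ≤ θ) (hθ : θ < Real.pi / 2) (hε : 0 < ε) (hC : 0 < C)
    (L : ℝ) (hL : L = ε * C / (n * (Real.tan θ + 1)))
    (Pp Pm Pi Qp Qm Qi : ℝ)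
    (hPp0 : 0 ≤ Pp) (hPm0 : 0 ≤ Pm) (hPi0 : 0 ≤ Pi)
    (hQp : max (Qp - n * L) 0 ≤ Pp ∧ Pp ≤ Qp)
    (hQm : max (Qm - n * L) 0 ≤ Pm ∧ Pm ≤ Qm)
    (hQi : max (Qi - n * L) 0 ≤ Pi ∧ Pi ≤ Qi)
    (hI : Pi ≤ C) (hm : Pm ≤ C * Real.tan θ) (hp : Pp ≤ C * (1 + Real.tan θ))
    (hmag : (Pp - Pm) ^ 2 + Pi ^ 2 ≤ C ^ 2) :
    (Qp - Qm) ^ 2 + Qi ^ 2 ≤ (1 + 2 * ε) ^ 2 * C ^ 2 :=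
  rounded_projection_bound_general n hn θ ε C hθ0 hθ hε hC L hL Pp Pm Pi Qp Qm Qi hQp hQm hQi hmag
end

section
/- If a binary vector x̄ is a feasible solution to the real-valued relaxation (Σ_k Σ_{j∈D_k, t∈T_j} |s_{k,j}| x̄_{k,j} ≤ C_t for all t, and at most one j per user k has x̄_{k,j} = 1) with utility u(x̄) ≥ ψ · OPT*_{bag}, where OPT*_{bag} is the LP optimum of the real-valued problem, and all demands s_{k,j} are complex numbers with arguments in [0, φ] for φ ≤ π/2, then x̄ is feasible for the complex-demand scheduling problem and u(x̄) ≥ ψ · cos(φ/2) · OPT, where OPT is the integer optimum of the complex-demand problem. -/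
/-!
The real relaxation only overestimates loads (triangle inequality), so `xb` is feasible for
the complex problem. Conversely, demands with arguments in `[0, φ]` lie in the sector of
half-width `φ / 2` around the direction `φ / 2`, where the norm of a nonnegative combination
is at least `cos (φ / 2)` times the sum of the norms. Hence a complex-feasible `z` scaled by
`cos (φ / 2)` is feasible for the real LP, and `hopt` compares its utility with that of `xb`.
-/

open Complex Finset

lemma cos_mul_norm_le_re_mul_exp {θ δ : ℝ} (s : ℂ) (hδ : δ ≤ Real.pi)
    (hs : |s.arg - θ| ≤ δ) :
    Real.cos δ * ‖s‖ ≤ (s * exp (-θ * I)).re := by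
  have hrot : s * exp (-θ * I) = ‖s‖ * exp ((s.arg - θ : ℝ) * I) := by
    conv_lhs => rw [← norm_mul_exp_arg_mul_I s]
    rw [mul_assoc, ← exp_add]
    push_cast
    ring_nf
  have hcos : Real.cos δ ≤ Real.cos (s.arg - θ) := by
    rw [← Real.cos_abs (s.arg - θ)]
    exact Real.cos_le_cos_of_nonneg_of_le_pi (abs_nonneg _) hδ hs
  rw [hrot, re_ofReal_mul, exp_ofReal_mul_I_re, mul_comm]
  exact mul_le_mul_of_nonneg_left hcos (norm_nonneg s)

lemma norm_sum_ofReal_mul_le {ι : Type*} (F : Finset ι) (z : ι → ℝ) (s : ι → ℂ)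
    (hz : ∀ j ∈ F, 0 ≤ z j) :
    ‖∑ j ∈ F, (z j : ℂ) * s j‖ ≤ ∑ j ∈ F, ‖s j‖ * z j := by
  refine (norm_sum_le _ _).trans (sum_le_sum fun j hj => ?_)
  rw [norm_mul, norm_real, Real.norm_of_nonneg (hz j hj), mul_comm]

/-- After rotating by `-θ`, every summand has real part at least `cos δ` times its norm. -/
lemma cos_mul_sum_norm_le_norm_sum_s10 {ι : Type*} {θ δ : ℝ} (F : Finset ι) (z : ι → ℝ)
    (s : ι → ℂ) (hδ : δ ≤ Real.pi) (hz : ∀ j ∈ F, 0 ≤ z j)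
    (hs : ∀ j ∈ F, |(s j).arg - θ| ≤ δ) :
    Real.cos δ * ∑ j ∈ F, ‖s j‖ * z j ≤ ‖∑ j ∈ F, (z j : ℂ) * s j‖ :=
  calc Real.cos δ * ∑ j ∈ F, ‖s j‖ * z j
      = ∑ j ∈ F, z j * (Real.cos δ * ‖s j‖) := by
        rw [mul_sum]; exact sum_congr rfl fun j _ => by ring
    _ ≤ ∑ j ∈ F, z j * (s j * exp (-θ * I)).re :=
        sum_le_sum fun j hj =>
          mul_le_mul_of_nonneg_left (cos_mul_norm_le_re_mul_exp _ hδ (hs j hj)) (hz j hj)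
    _ = ((∑ j ∈ F, (z j : ℂ) * s j) * exp (-θ * I)).re := by
        simp only [sum_mul, re_sum, mul_assoc, re_ofReal_mul]
    _ ≤ ‖∑ j ∈ F, (z j : ℂ) * s j‖ := by
        refine (re_le_norm _).trans_eq ?_
        rw [norm_mul, ← ofReal_neg, norm_exp_ofReal_mul_I, mul_one]

lemma mem_Icc_of_eq_zero_or_eq_one {x : ℝ} (hx : x = 0 ∨ x = 1) : x ∈ Set.Icc 0 1 := by
  rcases hx with rfl | rfl <;> norm_num

theorem bag_ufp_reduction_general (n m N : ℕ) (user : Fin N → Fin n) (s : Fin N → ℂ)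
    (u : Fin N → ℝ) (T : Fin N → Finset (Fin m)) (C : Fin m → ℝ) (φ ψ : ℝ)
    (hφ0 : 0 ≤ φ) (hφ : φ ≤ Real.pi / 2)
    (harg : ∀ j, 0 ≤ (s j).arg ∧ (s j).arg ≤ φ)
    (xb : Fin N → ℝ)
    (hbin : ∀ j, xb j = 0 ∨ xb j = 1)
    (hreal : ∀ t, ∑ j ∈ Finset.univ.filter (fun j => t ∈ T j),
        ‖s j‖ * xb j ≤ C t)
    (hopt : ∀ y : Fin N → ℝ,
        (∀ j, 0 ≤ y j ∧ y j ≤ 1) →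
        (∀ k, ∑ j ∈ Finset.univ.filter (fun j => user j = k), y j ≤ 1) →
        (∀ t, ∑ j ∈ Finset.univ.filter (fun j => t ∈ T j),
            ‖s j‖ * y j ≤ C t) →
        ψ * (∑ j, u j * y j) ≤ ∑ j, u j * xb j) :
    (∀ t, ‖∑ j ∈ Finset.univ.filter (fun j => t ∈ T j),
        (xb j : ℂ) * s j‖ ≤ C t) ∧
    (∀ z : Fin N → ℝ,
        (∀ j, z j = 0 ∨ z j = 1) →
        (∀ k, ∑ j ∈ Finset.univ.filter (fun j => user j = k), z j ≤ 1) →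
        (∀ t, ‖∑ j ∈ Finset.univ.filter (fun j => t ∈ T j),
            (z j : ℂ) * s j‖ ≤ C t) →
        ψ * Real.cos (φ / 2) * (∑ j, u j * z j) ≤ ∑ j, u j * xb j) := by
  refine ⟨fun t => (norm_sum_ofReal_mul_le _ _ _ fun j _ =>
    (mem_Icc_of_eq_zero_or_eq_one (hbin j)).1).trans (hreal t), ?_⟩
  intro z hz hzbag hzC
  have hz01 j := mem_Icc_of_eq_zero_or_eq_one (hz j)
  set c := Real.cos (φ / 2)
  have hc0 : 0 ≤ c := Real.cos_nonneg_of_mem_Icc ⟨by linarith [Real.pi_pos], by linarith⟩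
  have hc1 : c ≤ 1 := Real.cos_le_one _
  have hsector j : |(s j).arg - φ / 2| ≤ φ / 2 :=
    abs_le.2 ⟨by linarith [harg j], by linarith [harg j]⟩
  have hscaled := hopt (fun j => c * z j)
    (fun j => ⟨mul_nonneg hc0 (hz01 j).1, mul_le_one₀ hc1 (hz01 j).1 (hz01 j).2⟩)
    (fun k => by
      rw [← mul_sum]
      exact mul_le_one₀ hc1 (sum_nonneg fun j _ => (hz01 j).1) (hzbag k))
    (fun t => calc
      ∑ j ∈ univ.filter (fun j => t ∈ T j), ‖s j‖ * (c * z j)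
          = c * ∑ j ∈ univ.filter (fun j => t ∈ T j), ‖s j‖ * z j := by
        rw [mul_sum]; exact sum_congr rfl fun j _ => by ring
      _ ≤ _ := cos_mul_sum_norm_le_norm_sum_s10 _ _ _ (by linarith [Real.pi_pos])
        (fun j _ => (hz01 j).1) (fun j _ => hsector j)
      _ ≤ C t := hzC t)
  calc ψ * c * ∑ j, u j * z j = ψ * ∑ j, u j * (c * z j) := by
        rw [mul_assoc, mul_sum]; exact congrArg _ (sum_congr rfl fun j _ => by ring)
    _ ≤ ∑ j, u j * xb j := hscaled

theorem bag_ufp_reduction (n m N : ℕ) (user : Fin N → Fin n) (s : Fin N → ℂ)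
    (u : Fin N → ℝ) (T : Fin N → Finset (Fin m)) (C : Fin m → ℝ) (φ ψ : ℝ)
    (hu : ∀ j, 0 < u j)
    (hφ0 : 0 ≤ φ) (hφ : φ ≤ Real.pi / 2)
    (harg : ∀ j, 0 ≤ (s j).arg ∧ (s j).arg ≤ φ)
    (hψ : 0 ≤ ψ ∧ ψ ≤ 1)
    (xb : Fin N → ℝ)
    (hbin : ∀ j, xb j = 0 ∨ xb j = 1)
    (hbag : ∀ k, ∑ j ∈ Finset.univ.filter (fun j => user j = k), xb j ≤ 1)
    (hreal : ∀ t, ∑ j ∈ Finset.univ.filter (fun j => t ∈ T j),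
        ‖s j‖ * xb j ≤ C t)
    (hopt : ∀ y : Fin N → ℝ,
        (∀ j, 0 ≤ y j ∧ y j ≤ 1) →
        (∀ k, ∑ j ∈ Finset.univ.filter (fun j => user j = k), y j ≤ 1) →
        (∀ t, ∑ j ∈ Finset.univ.filter (fun j => t ∈ T j),
            ‖s j‖ * y j ≤ C t) →
        ψ * (∑ j, u j * y j) ≤ ∑ j, u j * xb j) :
    (∀ t, ‖∑ j ∈ Finset.univ.filter (fun j => t ∈ T j),
        (xb j : ℂ) * s j‖ ≤ C t) ∧
    (∀ z : Fin N → ℝ,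
        (∀ j, z j = 0 ∨ z j = 1) →
        (∀ k, ∑ j ∈ Finset.univ.filter (fun j => user j = k), z j ≤ 1) →
        (∀ t, ‖∑ j ∈ Finset.univ.filter (fun j => t ∈ T j),
            (z j : ℂ) * s j‖ ≤ C t) →
        ψ * Real.cos (φ / 2) * (∑ j, u j * z j) ≤ ∑ j, u j * xb j) :=
  bag_ufp_reduction_general n m N user s u T C φ ψ hφ0 hφ harg xb hbin hreal hopt
end

section
/- If x* is an optimal fractional solution of the complex-demand LP (|Σ s_{k,j} x*_{k,j}|-constraints with capacities C_t, arguments of all demands in [0, φ], φ ≤ π/2), then the scaled vector x̃_{k,j} = cos(φ/2) · x*_{k,j} is feasible for the real-valued LP with the same capacities, i.e. Σ_{k,j: t∈T_j} |s_{k,j}| x̃_{k,j} ≤ C_t for all t. Consequently OPT*_{bag} ≥ cos(φ/2) · OPT*_{complex}. -/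
open Complex Finset

theorem Complex.re_exp_neg_mul_I_mul (z : ℂ) (θ : ℝ) :
    (exp (-θ * I) * z).re = ‖z‖ * Real.cos (z.arg - θ) := by
  conv_lhs => rw [← norm_mul_exp_arg_mul_I z]
  rw [mul_left_comm, ← exp_add, ← add_mul, ← ofReal_neg, ← ofReal_add, re_ofReal_mul,
    exp_ofReal_mul_I_re, neg_add_eq_sub]

/-- Rotating by `-φ/2` moves the sector `[0, φ]` to `[-φ/2, φ/2]`, where the real part is at least
`cos (φ/2)` times the modulus. -/
theorem Complex.cos_half_mul_norm_le_re_exp_mul {z : ℂ} {φ : ℝ} (h0 : 0 ≤ z.arg)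
    (hφ : z.arg ≤ φ) (hφ2 : φ ≤ 2 * Real.pi) :
    Real.cos (φ / 2) * ‖z‖ ≤ (exp (-(φ / 2 : ℝ) * I) * z).re := by
  have hcos : Real.cos (φ / 2) ≤ Real.cos (z.arg - φ / 2) := by
    rw [← Real.cos_abs (z.arg - φ / 2)]
    exact Real.cos_le_cos_of_nonneg_of_le_pi (abs_nonneg _) (by linarith)
      (abs_le.2 ⟨by linarith, by linarith⟩)
  rw [re_exp_neg_mul_I_mul, mul_comm]
  exact mul_le_mul_of_nonneg_left hcos (norm_nonneg z)

theorem Complex.cos_half_mul_sum_norm_le_norm_sum {ι : Type*} (s : Finset ι) (z : ι → ℂ)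
    {φ : ℝ} (harg : ∀ i ∈ s, 0 ≤ (z i).arg ∧ (z i).arg ≤ φ) (hφ2 : φ ≤ 2 * Real.pi) :
    Real.cos (φ / 2) * ∑ i ∈ s, ‖z i‖ ≤ ‖∑ i ∈ s, z i‖ :=
  calc Real.cos (φ / 2) * ∑ i ∈ s, ‖z i‖
      ≤ ∑ i ∈ s, (exp (-(φ / 2 : ℝ) * I) * z i).re := by
        rw [mul_sum]
        exact sum_le_sum fun i hi ↦
          cos_half_mul_norm_le_re_exp_mul (harg i hi).1 (harg i hi).2 hφ2
    _ = (exp (-(φ / 2 : ℝ) * I) * ∑ i ∈ s, z i).re := by rw [mul_sum, re_sum]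
    _ ≤ ‖exp (-(φ / 2 : ℝ) * I) * ∑ i ∈ s, z i‖ := re_le_norm _
    _ = ‖∑ i ∈ s, z i‖ := by rw [norm_mul, ← ofReal_neg, norm_exp_ofReal_mul_I, one_mul]

theorem Complex.arg_ofReal_mul_of_nonneg {r : ℝ} (hr : 0 ≤ r) (z : ℂ) (harg : 0 ≤ z.arg) :
    0 ≤ (r * z).arg ∧ (r * z).arg ≤ z.arg := by
  rcases hr.eq_or_lt with rfl | hr
  · simpa using harg
  · rw [arg_real_mul z hr]
    exact ⟨harg, le_rfl⟩

theorem scaled_lp_feasibility_general (n m N : ℕ) (user : Fin N → Fin n) (s : Fin N → ℂ)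
    (u : Fin N → ℝ) (T : Fin N → Finset (Fin m)) (C : Fin m → ℝ) (φ : ℝ)
    (hφ0 : 0 ≤ φ) (hφ : φ ≤ Real.pi / 2)
    (harg : ∀ j, 0 ≤ (s j).arg ∧ (s j).arg ≤ φ)
    (xs : Fin N → ℝ)
    (hx : ∀ j, 0 ≤ xs j ∧ xs j ≤ 1)
    (hbag : ∀ k, ∑ j ∈ Finset.univ.filter (fun j => user j = k), xs j ≤ 1)
    (hcomplex : ∀ t, ‖∑ j ∈ Finset.univ.filter (fun j => t ∈ T j),
        (xs j : ℂ) * s j‖ ≤ C t) :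
    (∀ j, 0 ≤ Real.cos (φ / 2) * xs j ∧ Real.cos (φ / 2) * xs j ≤ 1) ∧
    (∀ k, ∑ j ∈ Finset.univ.filter (fun j => user j = k),
        Real.cos (φ / 2) * xs j ≤ 1) ∧
    (∀ t, ∑ j ∈ Finset.univ.filter (fun j => t ∈ T j),
        ‖s j‖ * (Real.cos (φ / 2) * xs j) ≤ C t) ∧
    (∑ j, u j * (Real.cos (φ / 2) * xs j) = Real.cos (φ / 2) * ∑ j, u j * xs j) := by
  have hc0 : 0 ≤ Real.cos (φ / 2) :=
    Real.cos_nonneg_of_mem_Icc ⟨by linarith [Real.pi_pos], by linarith⟩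
  have hc1 : Real.cos (φ / 2) ≤ 1 := Real.cos_le_one _
  refine ⟨fun j ↦ ⟨mul_nonneg hc0 (hx j).1, mul_le_one₀ hc1 (hx j).1 (hx j).2⟩,
    fun k ↦ ?_, fun t ↦ ?_, by simp only [mul_sum, mul_left_comm]⟩
  · rw [← mul_sum]
    exact mul_le_one₀ hc1 (sum_nonneg fun j _ ↦ (hx j).1) (hbag k)
  · have hnorm : ∀ j, ‖(xs j : ℂ) * s j‖ = xs j * ‖s j‖ := fun j ↦ by
      rw [norm_mul, norm_real, Real.norm_of_nonneg (hx j).1]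
    have hsector : ∀ j ∈ univ.filter (fun j ↦ t ∈ T j),
        0 ≤ ((xs j : ℂ) * s j).arg ∧ ((xs j : ℂ) * s j).arg ≤ φ := fun j _ ↦
      have h := arg_ofReal_mul_of_nonneg (hx j).1 (s j) (harg j).1
      ⟨h.1, h.2.trans (harg j).2⟩
    calc ∑ j ∈ univ.filter (fun j ↦ t ∈ T j), ‖s j‖ * (Real.cos (φ / 2) * xs j)
        = Real.cos (φ / 2) * ∑ j ∈ univ.filter (fun j ↦ t ∈ T j), ‖(xs j : ℂ) * s j‖ := by
          simp only [hnorm, mul_sum]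
          exact sum_congr rfl fun j _ ↦ by ring
      _ ≤ C t := (cos_half_mul_sum_norm_le_norm_sum _ _ hsector
          (by linarith [Real.pi_pos])).trans (hcomplex t)

theorem scaled_lp_feasibility (n m N : ℕ) (user : Fin N → Fin n) (s : Fin N → ℂ)
    (u : Fin N → ℝ) (T : Fin N → Finset (Fin m)) (C : Fin m → ℝ) (φ : ℝ)
    (hu : ∀ j, 0 < u j)
    (hφ0 : 0 ≤ φ) (hφ : φ ≤ Real.pi / 2)
    (harg : ∀ j, 0 ≤ (s j).arg ∧ (s j).arg ≤ φ)
    (xs : Fin N → ℝ)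
    (hx : ∀ j, 0 ≤ xs j ∧ xs j ≤ 1)
    (hbag : ∀ k, ∑ j ∈ Finset.univ.filter (fun j => user j = k), xs j ≤ 1)
    (hcomplex : ∀ t, ‖∑ j ∈ Finset.univ.filter (fun j => t ∈ T j),
        (xs j : ℂ) * s j‖ ≤ C t)
    (hopt : ∀ y : Fin N → ℝ,
        (∀ j, 0 ≤ y j ∧ y j ≤ 1) →
        (∀ k, ∑ j ∈ Finset.univ.filter (fun j => user j = k), y j ≤ 1) →
        (∀ t, ‖∑ j ∈ Finset.univ.filter (fun j => t ∈ T j),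
            (y j : ℂ) * s j‖ ≤ C t) →
        ∑ j, u j * y j ≤ ∑ j, u j * xs j) :
    (∀ j, 0 ≤ Real.cos (φ / 2) * xs j ∧ Real.cos (φ / 2) * xs j ≤ 1) ∧
    (∀ k, ∑ j ∈ Finset.univ.filter (fun j => user j = k),
        Real.cos (φ / 2) * xs j ≤ 1) ∧
    (∀ t, ∑ j ∈ Finset.univ.filter (fun j => t ∈ T j),
        ‖s j‖ * (Real.cos (φ / 2) * xs j) ≤ C t) ∧
    (∑ j, u j * (Real.cos (φ / 2) * xs j) = Real.cos (φ / 2) * ∑ j, u j * xs j) :=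
  scaled_lp_feasibility_general n m N user s u T C φ hφ0 hφ harg xs hx hbag hcomplex
end

section
/- In the multiple-choice knapsack LP relaxation, if two items j, h in the same class D_k satisfy |s_{k,j}| ≤ |s_{k,h}| and u_{k,j}/|s_{k,j}| ≥ u_{k,h}/|s_{k,h}| and u_{k,j} ≥ u_{k,h}, then there exists an optimal integral solution (to the binary problem with sum-of-magnitudes constraint) with x_{k,h} = 0. -/
/-!
Among the feasible selections avoiding `h`, pick one of maximal utility. It is optimal outright:
a feasible selection containing `h` cannot contain `j`, which lies in the same class, so trading
`h` for `j` keeps it feasible (`j` is no heavier) without losing utility (`j` is no less useful)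
and yields a feasible selection avoiding `h`.
-/

open Finset

namespace MultipleChoiceKnapsack

variable {ι κ : Type*}

theorem injOn_iff_forall_card_filter_le_one [DecidableEq κ] (cls : ι → κ) (S : Finset ι) :
    Set.InjOn cls S ↔ ∀ k, #(S.filter (cls · = k)) ≤ 1 := by
  simp only [card_le_one, mem_filter, Set.InjOn, mem_coe]
  exact ⟨fun hinj _ a ha b hb => hinj ha.1 hb.1 (ha.2.trans hb.2.symm),
    fun hcard a ha b hb hab => hcard _ a ⟨ha, rfl⟩ b ⟨hb, hab.symm⟩⟩

/-- `Set.InjOn cls S` says that `S` takes at most one item from each class. -/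
def IsFeasible (cls : ι → κ) (w : ι → ℝ) (C : ℝ) (S : Finset ι) : Prop :=
  ∑ i ∈ S, w i ≤ C ∧ Set.InjOn cls S

variable {cls : ι → κ} {w : ι → ℝ} {C : ℝ}

theorem isFeasible_empty (hC : 0 ≤ C) : IsFeasible cls w C ∅ := by
  simp [IsFeasible, hC]

variable [DecidableEq ι] {S : Finset ι} {h j : ι}

theorem sum_insert_erase {M : Type*} [AddCommGroup M] (f : ι → M) (hh : h ∈ S)
    (hj : j ∉ S.erase h) :
    ∑ i ∈ insert j (S.erase h), f i = f j + (∑ i ∈ S, f i - f h) := by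
  rw [sum_insert hj, sum_erase_eq_sub hh]

theorem notMem_erase_of_injOn (hinj : Set.InjOn cls S) (hh : h ∈ S) (hcls : cls j = cls h) :
    j ∉ S.erase h := fun hj =>
  ne_of_mem_erase hj (hinj (mem_of_mem_erase hj) hh hcls)

theorem IsFeasible.insert_erase (hS : IsFeasible cls w C S) (hh : h ∈ S)
    (hcls : cls j = cls h) (hw : w j ≤ w h) :
    IsFeasible cls w C (insert j (S.erase h)) := by
  obtain ⟨hcap, hinj⟩ := hS
  refine ⟨?_, ?_⟩
  · rw [sum_insert_erase w hh (notMem_erase_of_injOn hinj hh hcls)]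
    linarith
  · rw [coe_insert, Set.injOn_insert (by exact_mod_cast notMem_erase_of_injOn hinj hh hcls)]
    refine ⟨hinj.mono (by simp), ?_⟩
    rintro ⟨i, hi, hicls⟩
    exact ne_of_mem_erase hi (hinj (mem_of_mem_erase hi) hh (hicls.trans hcls))

theorem exists_isFeasible_notMem_sum_le {u : ι → ℝ} (hjh : j ≠ h) (hcls : cls j = cls h)
    (hw : w j ≤ w h) (hu : u h ≤ u j) (hS : IsFeasible cls w C S) :
    ∃ T, IsFeasible cls w C T ∧ h ∉ T ∧ ∑ i ∈ S, u i ≤ ∑ i ∈ T, u i := by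
  by_cases hh : h ∈ S
  · refine ⟨insert j (S.erase h), hS.insert_erase hh hcls hw, by simp [hjh.symm], ?_⟩
    rw [sum_insert_erase u hh (notMem_erase_of_injOn hS.2 hh hcls)]
    linarith
  · exact ⟨S, hS, hh, le_rfl⟩

end MultipleChoiceKnapsack

open MultipleChoiceKnapsack

theorem dominated_item_removal_general (n N : ℕ) (user : Fin N → Fin n)
    (u w : Fin N → ℝ) (C : ℝ)
    (hC : 0 ≤ C)
    (j h : Fin N) (hjh : j ≠ h) (huser : user j = user h)
    (hwle : w j ≤ w h) (hule : u h ≤ u j) :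
    ∃ S : Finset (Fin N),
      (∑ i ∈ S, w i ≤ C) ∧
      (∀ k, (S.filter (fun i => user i = k)).card ≤ 1) ∧
      h ∉ S ∧
      (∀ S' : Finset (Fin N), (∑ i ∈ S', w i ≤ C) →
        (∀ k, (S'.filter (fun i => user i = k)).card ≤ 1) →
        ∑ i ∈ S', u i ≤ ∑ i ∈ S, u i) := by
  classical
  simp only [← injOn_iff_forall_card_filter_le_one]
  obtain ⟨S, hS, hmax⟩ := (univ.filter fun S => IsFeasible user w C S ∧ h ∉ S).exists_max_image
    (∑ i ∈ ·, u i) ⟨∅, by simp [isFeasible_empty hC]⟩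
  simp only [mem_filter, mem_univ, true_and] at hS hmax
  refine ⟨S, hS.1.1, hS.1.2, hS.2, fun S' hcap hinj => ?_⟩
  obtain ⟨T, hT, hhT, hle⟩ := exists_isFeasible_notMem_sum_le hjh huser hwle hule ⟨hcap, hinj⟩
  exact hle.trans (hmax T ⟨hT, hhT⟩)

theorem dominated_item_removal (n N : ℕ) (user : Fin N → Fin n)
    (u w : Fin N → ℝ) (C : ℝ)
    (hu : ∀ i, 0 < u i) (hw : ∀ i, 0 < w i) (hC : 0 ≤ C)
    (j h : Fin N) (hjh : j ≠ h) (huser : user j = user h)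
    (hwle : w j ≤ w h) (hratio : u h / w h ≤ u j / w j) (hule : u h ≤ u j) :
    ∃ S : Finset (Fin N),
      (∑ i ∈ S, w i ≤ C) ∧
      (∀ k, (S.filter (fun i => user i = k)).card ≤ 1) ∧
      h ∉ S ∧
      (∀ S' : Finset (Fin N), (∑ i ∈ S', w i ≤ C) →
        (∀ k, (S'.filter (fun i => user i = k)).card ≤ 1) →
        ∑ i ∈ S', u i ≤ ∑ i ∈ S, u i) :=
  dominated_item_removal_general n N user u w C hC j h hjh huser hwle hule
end
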